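/- arXiv:1903.12485 — 3 statements merged into one kernel-verified Lean document; each statement's English description precedes it below -/
import Mathlib

section
/- For real numbers τ < t ≤ T and x ∈ ℝⁿ with |x| ≤ √(T-t), there exists a constant C = C(n) > 0 such that ∫_{|ξ| < √(T-τ)} (4π(t-τ))^{-n/2} exp(-|x-ξ|²/(4(t-τ))) dξ ≥ C. -/
/-!
Put `s = t - τ`. The half of the ball of radius `√s` around `x` that faces the origin lies in the
ball of radius `√(T - τ)`, since on it `‖ξ‖² ≤ ‖x‖² + ‖ξ - x‖² < (T - t) + s`. There the kernel is
at least `e^{-1/4} (4πs)^{-n/2}`, and by the symmetry `ξ - x ↦ x - ξ` the half ball has at least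
half the volume `s^{n/2} |B₁|` of the full ball, so the powers of `s` cancel.
-/

open Real MeasureTheory Metric Module Set
open scoped RealInnerProductSpace

section InnerHalfBall

variable {E : Type*} [NormedAddCommGroup E] [InnerProductSpace ℝ E]

/-- The half of `ball x r` cut off by the hyperplane through `x` orthogonal to `x`, on the side
of the origin. -/
def innerHalfBall (x : E) (r : ℝ) : Set E :=
  ball x r ∩ {ξ | ⟪x, ξ - x⟫ ≤ 0}

theorem norm_sq_le_of_inner_sub_nonpos {x y : E} (h : ⟪x, y - x⟫ ≤ 0) :
    ‖y‖ ^ 2 ≤ ‖x‖ ^ 2 + ‖y - x‖ ^ 2 := by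
  have := norm_add_sq_real x (y - x)
  rw [add_sub_cancel] at this
  linarith

theorem innerHalfBall_subset_ball (x : E) (r : ℝ) :
    innerHalfBall x r ⊆ ball 0 √(‖x‖ ^ 2 + r ^ 2) := by
  rintro ξ ⟨hξ, hinner⟩
  rw [mem_ball, dist_eq_norm] at hξ
  rw [mem_ball_zero_iff]
  apply lt_sqrt_of_sq_lt
  nlinarith [norm_sq_le_of_inner_sub_nonpos hinner, norm_nonneg (ξ - x)]

variable [MeasurableSpace E] [BorelSpace E]

theorem measurableSet_innerHalfBall (x : E) (r : ℝ) : MeasurableSet (innerHalfBall x r) :=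
  measurableSet_ball.inter <|
    (isClosed_le (continuous_const.inner (continuous_id.sub continuous_const))
      continuous_const).measurableSet

variable (μ : Measure E)

theorem measure_innerHalfBall_eq [μ.IsAddLeftInvariant] (x : E) (r : ℝ) :
    μ (innerHalfBall x r) = μ (ball 0 r ∩ {z | ⟪x, z⟫ ≤ 0}) := by
  have : innerHalfBall x r = (-x + ·) ⁻¹' (ball 0 r ∩ {z | ⟪x, z⟫ ≤ 0}) := by
    ext ξ
    simp [innerHalfBall, dist_eq_norm, neg_add_eq_sub]
  rw [this, measure_preimage_add]

theorem measure_ball_le_two_mul_measure_inter_halfspace [μ.IsNegInvariant] (v : E) (r : ℝ) :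
    μ (ball 0 r) ≤ 2 * μ (ball 0 r ∩ {z | ⟪v, z⟫ ≤ 0}) := by
  set H := ball (0 : E) r ∩ {z | ⟪v, z⟫ ≤ 0}
  have hcover : ball (0 : E) r ⊆ H ∪ -H := by
    intro z hz
    rcases le_total ⟪v, z⟫ 0 with h | h
    · exact Or.inl ⟨hz, h⟩
    · exact Or.inr ⟨by simpa using hz, by simpa using h⟩
  calc μ (ball 0 r) ≤ μ (H ∪ -H) := measure_mono hcover
    _ ≤ μ H + μ (-H) := measure_union_le _ _
    _ = 2 * μ H := by rw [Measure.measure_neg, two_mul]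

theorem measureReal_ball_mul_pow_div_two_le_measureReal_innerHalfBall [FiniteDimensional ℝ E]
    [μ.IsAddHaarMeasure] [μ.IsNegInvariant] (x : E) {r : ℝ} (hr : 0 < r) :
    μ.real (ball 0 1) * r ^ finrank ℝ E / 2 ≤ μ.real (innerHalfBall x r) := by
  have hfin : μ (innerHalfBall x r) ≠ ⊤ :=
    measure_ne_top_of_subset inter_subset_left measure_ball_lt_top.ne
  have h := measure_ball_le_two_mul_measure_inter_halfspace μ x r
  rw [← measure_innerHalfBall_eq, Measure.addHaar_ball_of_pos μ _ hr] at h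
  have h' := ENNReal.toReal_mono (ENNReal.mul_ne_top ENNReal.ofNat_ne_top hfin) h
  rw [ENNReal.toReal_mul, ENNReal.toReal_mul, ENNReal.toReal_ofReal (by positivity)] at h'
  simp only [measureReal_def, ENNReal.toReal_ofNat] at h' ⊢
  linarith

end InnerHalfBall

section HeatKernel

noncomputable def heatKernel (n : ℕ) (z : EuclideanSpace ℝ (Fin n)) (s : ℝ) : ℝ :=
  (4 * π * s) ^ (-(n : ℝ) / 2) * exp (-‖z‖ ^ 2 / (4 * s))

variable {n : ℕ}

theorem continuous_heatKernel (s : ℝ) : Continuous fun z => heatKernel n z s := by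
  unfold heatKernel
  fun_prop

theorem integrableOn_heatKernel_sub (x : EuclideanSpace ℝ (Fin n)) (s : ℝ)
    {S : Set (EuclideanSpace ℝ (Fin n))} (hS : Bornology.IsBounded S) :
    IntegrableOn (fun ξ => heatKernel n (x - ξ) s) S :=
  ((continuous_heatKernel s).comp (continuous_const.sub continuous_id)).locallyIntegrable
    |>.integrableOn_isCompact hS.isCompact_closure |>.mono_set subset_closure

theorem heatKernel_nonneg (z : EuclideanSpace ℝ (Fin n)) {s : ℝ} (hs : 0 ≤ s) :
    0 ≤ heatKernel n z s := by
  unfold heatKernel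
  have : 0 ≤ (4 * π * s) ^ (-(n : ℝ) / 2) := rpow_nonneg (by positivity) _
  positivity

theorem rpow_neg_half_mul_exp_le_heatKernel {z : EuclideanSpace ℝ (Fin n)} {s : ℝ}
    (hz : ‖z‖ < √s) : (4 * π * s) ^ (-(n : ℝ) / 2) * exp (-(1 / 4)) ≤ heatKernel n z s := by
  have hs : 0 < s := sqrt_pos.1 ((norm_nonneg z).trans_lt hz)
  have hz2 : ‖z‖ ^ 2 ≤ s := by
    simpa [sq_sqrt hs.le] using pow_le_pow_left₀ (norm_nonneg z) hz.le 2
  refine mul_le_mul_of_nonneg_left (exp_le_exp.2 ?_) (rpow_nonneg (by positivity) _)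
  rw [neg_div, neg_le_neg_iff, div_le_iff₀ (by positivity)]
  linarith

theorem mul_rpow_neg_half_mul_sqrt_pow {a s : ℝ} (ha : 0 ≤ a) (hs : 0 < s) :
    (a * s) ^ (-(n : ℝ) / 2) * √s ^ n = a ^ (-(n : ℝ) / 2) := by
  rw [mul_rpow ha hs.le, sqrt_eq_rpow, ← rpow_natCast, ← rpow_mul hs.le, mul_assoc,
    ← rpow_add hs]
  ring_nf
  rw [rpow_zero, mul_one]

theorem le_setIntegral_innerHalfBall_heatKernel (x : EuclideanSpace ℝ (Fin n)) {s : ℝ}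
    (hs : 0 < s) :
    (4 * π) ^ (-(n : ℝ) / 2) * exp (-(1 / 4)) *
        (volume.real (ball (0 : EuclideanSpace ℝ (Fin n)) 1) / 2)
      ≤ ∫ ξ in innerHalfBall x √s, heatKernel n (x - ξ) s := by
  have hvol :=
    measureReal_ball_mul_pow_div_two_le_measureReal_innerHalfBall volume x (sqrt_pos.2 hs)
  rw [finrank_euclideanSpace_fin] at hvol
  have hbound : ∀ ξ ∈ innerHalfBall x √s,
      (4 * π * s) ^ (-(n : ℝ) / 2) * exp (-(1 / 4)) ≤ heatKernel n (x - ξ) s := by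
    rintro ξ ⟨hξ, -⟩
    rw [mem_ball, dist_comm, dist_eq_norm] at hξ
    exact rpow_neg_half_mul_exp_le_heatKernel hξ
  calc (4 * π) ^ (-(n : ℝ) / 2) * exp (-(1 / 4)) *
          (volume.real (ball (0 : EuclideanSpace ℝ (Fin n)) 1) / 2)
      = (4 * π * s) ^ (-(n : ℝ) / 2) * exp (-(1 / 4)) *
          (volume.real (ball (0 : EuclideanSpace ℝ (Fin n)) 1) * √s ^ n / 2) := by
        rw [← mul_rpow_neg_half_mul_sqrt_pow (n := n) (by positivity : (0 : ℝ) ≤ 4 * π) hs]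
        ring
    _ ≤ (4 * π * s) ^ (-(n : ℝ) / 2) * exp (-(1 / 4)) * volume.real (innerHalfBall x √s) :=
        mul_le_mul_of_nonneg_left hvol (by positivity)
    _ ≤ _ := setIntegral_ge_of_const_le_real (measurableSet_innerHalfBall x _)
        (measure_ne_top_of_subset inter_subset_left measure_ball_lt_top.ne) hbound
        (integrableOn_heatKernel_sub x s (isBounded_ball.subset inter_subset_left))

end HeatKernel

theorem stmt_4_general (n : ℕ) :
    ∃ C : ℝ, 0 < C ∧ ∀ (x : EuclideanSpace ℝ (Fin n)) (τ t T : ℝ),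
      τ < t → t ≤ T → ‖x‖ ≤ Real.sqrt (T - t) →
      C ≤ ∫ ξ in {ξ : EuclideanSpace ℝ (Fin n) | ‖ξ‖ < Real.sqrt (T - τ)},
        (4 * Real.pi * (t - τ)) ^ (-(n : ℝ) / 2) *
          Real.exp (-‖x - ξ‖ ^ 2 / (4 * (t - τ))) := by
  have hball : 0 < volume.real (ball (0 : EuclideanSpace ℝ (Fin n)) 1) :=
    ENNReal.toReal_pos (measure_ball_pos _ _ one_pos).ne' measure_ball_lt_top.ne
  refine ⟨(4 * π) ^ (-(n : ℝ) / 2) * exp (-(1 / 4)) *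
    (volume.real (ball (0 : EuclideanSpace ℝ (Fin n)) 1) / 2), by positivity,
    fun x τ t T hτt htT hx => ?_⟩
  have hs : 0 < t - τ := sub_pos.2 hτt
  have hS : {ξ : EuclideanSpace ℝ (Fin n) | ‖ξ‖ < √(T - τ)} = ball 0 √(T - τ) := by
    ext ξ
    exact mem_ball_zero_iff.symm
  have hsub : innerHalfBall x √(t - τ) ⊆ ball 0 √(T - τ) := by
    have hx2 : ‖x‖ ^ 2 ≤ T - t := by
      simpa [sq_sqrt (sub_nonneg.2 htT)] using pow_le_pow_left₀ (norm_nonneg x) hx 2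
    refine (innerHalfBall_subset_ball x _).trans (ball_subset_ball (sqrt_le_sqrt ?_))
    rw [sq_sqrt hs.le]
    linarith
  rw [hS]
  calc _ ≤ ∫ ξ in innerHalfBall x √(t - τ), heatKernel n (x - ξ) (t - τ) :=
        le_setIntegral_innerHalfBall_heatKernel x hs
    _ ≤ ∫ ξ in ball 0 √(T - τ), heatKernel n (x - ξ) (t - τ) :=
        setIntegral_mono_set (integrableOn_heatKernel_sub x _ isBounded_ball)
          (.of_forall fun ξ => heatKernel_nonneg _ hs.le) hsub.eventuallyLE

theorem stmt_4 (n : ℕ) (hn : 1 ≤ n) :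
    ∃ C : ℝ, 0 < C ∧ ∀ (x : EuclideanSpace ℝ (Fin n)) (τ t T : ℝ),
      τ < t → t ≤ T → ‖x‖ ≤ Real.sqrt (T - t) →
      C ≤ ∫ ξ in {ξ : EuclideanSpace ℝ (Fin n) | ‖ξ‖ < Real.sqrt (T - τ)},
        (4 * Real.pi * (t - τ)) ^ (-(n : ℝ) / 2) *
          Real.exp (-‖x - ξ‖ ^ 2 / (4 * (t - τ))) :=
  stmt_4_general n
end

section
/- Let λ, σ, α, β > 0 with λσ < 1, and set γ₁ = (β+ασ)λ/(1-λσ), γ₂ = (α+βλ)σ/(1-λσ), M₁ = Γ(γ₁+1)Γ(γ₂+1)^{1/σ} / (Γ(α+γ₁+1)Γ(β+γ₂+1)^{1/σ}). Define F(t) = M₁^{λσ/(1-λσ)} t^{γ₁} for t > 0 and F(t) = 0 for t ≤ 0, and G(t) = M₂^{λσ/(1-λσ)} t^{γ₂} for t > 0 and 0 for t ≤ 0, where M₂ = Γ(γ₂+1)Γ(γ₁+1)^{1/λ}/(Γ(β+γ₂+1)Γ(α+γ₁+1)^{1/λ}). Then for all t > 0: ∫₀ᵗ ((t-τ)^{α-1}/Γ(α))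 F(τ) dτ = G(t)^{1/σ} and ∫₀ᵗ ((t-τ)^{β-1}/Γ(β)) G(τ) dτ = F(t)^{1/λ}. -/
open Real MeasureTheory

/-! The Riemann–Liouville integral `J_α` maps `τ ^ γ` to `Γ(γ+1)/Γ(α+γ+1) · t ^ (α+γ)`, a Beta
integral. For the power ansatz the system therefore splits into a linear system for the exponents,
`γ₂ / σ = α + γ₁` and `γ₁ / λ = β + γ₂`, and, after taking logarithms, a linear system for
`log M₁` and `log M₂`; the stated `γᵢ` and `Mᵢ` solve them. -/

lemma integral_rpow_mul_sub_rpow {a b t : ℝ} (ha : 0 < a) (hb : 0 < b) (ht : 0 < t) :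
    ∫ x in (0)..t, x ^ (a - 1) * (t - x) ^ (b - 1)
      = Gamma a * Gamma b / Gamma (a + b) * t ^ (a + b - 1) := by
  apply Complex.ofReal_injective
  calc ((∫ x in (0)..t, x ^ (a - 1) * (t - x) ^ (b - 1) : ℝ) : ℂ)
      = ∫ x in (0)..t, (x : ℂ) ^ ((a : ℂ) - 1) * ((t : ℂ) - x) ^ ((b : ℂ) - 1) := by
        rw [← intervalIntegral.integral_ofReal]
        refine intervalIntegral.integral_congr fun x hx => ?_
        rw [Set.uIcc_of_le ht.le] at hx
        push_cast [Complex.ofReal_cpow hx.1, Complex.ofReal_cpow (sub_nonneg.2 hx.2)]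
        rfl
    _ = (t : ℂ) ^ ((a : ℂ) + b - 1) * Complex.betaIntegral a b :=
        Complex.betaIntegral_scaled _ _ ht
    _ = _ := by
        rw [Complex.betaIntegral_eq_Gamma_mul_div _ _ (by simpa) (by simpa)]
        push_cast [Complex.ofReal_cpow ht.le, ← Complex.Gamma_ofReal]
        ring

lemma setIntegral_Ioo_riemannLiouville_rpow {α γ c t : ℝ} {f : ℝ → ℝ} (hα : 0 < α)
    (hγ : -1 < γ) (ht : 0 < t) (hf : ∀ τ > 0, f τ = c * τ ^ γ) :
    ∫ τ in Set.Ioo 0 t, (t - τ) ^ (α - 1) / Gamma α * f τ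
      = c * (Gamma (γ + 1) / Gamma (α + γ + 1)) * t ^ (α + γ) := by
  calc ∫ τ in Set.Ioo 0 t, (t - τ) ^ (α - 1) / Gamma α * f τ
      = c / Gamma α * ∫ τ in (0)..t, τ ^ (γ + 1 - 1) * (t - τ) ^ (α - 1) := by
        rw [intervalIntegral.integral_of_le ht.le, integral_Ioc_eq_integral_Ioo,
          ← integral_const_mul]
        refine setIntegral_congr_fun measurableSet_Ioo fun τ hτ => ?_
        rw [hf τ hτ.1, add_sub_cancel_right]
        ring
    _ = _ := by
        rw [integral_rpow_mul_sub_rpow (by linarith) hα ht, add_comm (γ + 1) α,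
          ← add_assoc, add_sub_cancel_right]
        field_simp [(Gamma_pos_of_pos hα).ne']

lemma setIntegral_Ioo_riemannLiouville_rpow_eq_rpow_one_div {α γ γ' q c c' t : ℝ}
    {f : ℝ → ℝ} (hα : 0 < α) (hγ : -1 < γ) (ht : 0 < t) (hf : ∀ τ > 0, f τ = c * τ ^ γ)
    (hc' : 0 ≤ c') (hexp : γ' * (1 / q) = α + γ)
    (hconst : c * (Gamma (γ + 1) / Gamma (α + γ + 1)) = c' ^ (1 / q)) :
    ∫ τ in Set.Ioo 0 t, (t - τ) ^ (α - 1) / Gamma α * f τ = (c' * t ^ γ') ^ (1 / q) := by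
  rw [setIntegral_Ioo_riemannLiouville_rpow hα hγ ht hf, hconst,
    mul_rpow hc' (rpow_nonneg ht.le _), ← rpow_mul ht.le, hexp]

-- In logarithms both sides are `(log A + p * log B) / (1 - p * q)`.
lemma mul_rpow_mul_self_eq {A B p q : ℝ} (hA : 0 < A) (hB : 0 < B) (hp : p ≠ 0) (hq : q ≠ 0)
    (hpq : p * q ≠ 1) :
    (A * B ^ (1 / q)) ^ (p * q / (1 - p * q)) * A
      = ((B * A ^ (1 / p)) ^ (p * q / (1 - p * q))) ^ (1 / q) := by
  have hpq' : 1 - p * q ≠ 0 := sub_ne_zero.2 hpq.symm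
  refine log_injOn_pos (Set.mem_Ioi.2 (by positivity)) (Set.mem_Ioi.2 (by positivity)) ?_
  have hAB : 0 < A * B ^ (1 / q) := by positivity
  have hBA : 0 < B * A ^ (1 / p) := by positivity
  rw [log_mul (by positivity) hA.ne', log_rpow hAB, log_rpow (by positivity), log_rpow hBA,
    log_mul hA.ne' (by positivity), log_mul hB.ne' (by positivity), log_rpow hA, log_rpow hB]
  field_simp
  ring

lemma exponent_balance {l σ α β : ℝ} (hσ : σ ≠ 0) (hlσ : l * σ ≠ 1) :
    (α + β * l) * σ / (1 - l * σ) * (1 / σ) = α + (β + α * σ) * l / (1 - l * σ) := by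
  have : 1 - l * σ ≠ 0 := sub_ne_zero.2 hlσ.symm
  field_simp
  ring

theorem stmt_9 (l σ α β : ℝ) (hl : 0 < l) (hσ : 0 < σ) (hα : 0 < α) (hβ : 0 < β)
    (hls : l * σ < 1)
    (γ₁ γ₂ M₁ M₂ : ℝ)
    (hγ₁ : γ₁ = (β + α * σ) * l / (1 - l * σ))
    (hγ₂ : γ₂ = (α + β * l) * σ / (1 - l * σ))
    (hM₁ : M₁ = Real.Gamma (γ₁ + 1) * Real.Gamma (γ₂ + 1) ^ (1 / σ) /
      (Real.Gamma (α + γ₁ + 1) * Real.Gamma (β + γ₂ + 1) ^ (1 / σ)))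
    (hM₂ : M₂ = Real.Gamma (γ₂ + 1) * Real.Gamma (γ₁ + 1) ^ (1 / l) /
      (Real.Gamma (β + γ₂ + 1) * Real.Gamma (α + γ₁ + 1) ^ (1 / l)))
    (F G : ℝ → ℝ)
    (hF : ∀ t, F t = if 0 < t then M₁ ^ (l * σ / (1 - l * σ)) * t ^ γ₁ else 0)
    (hG : ∀ t, G t = if 0 < t then M₂ ^ (l * σ / (1 - l * σ)) * t ^ γ₂ else 0) :
    ∀ t > 0,
      (∫ τ in Set.Ioo (0:ℝ) t, (t - τ) ^ (α - 1) / Real.Gamma α * F τ) = G t ^ (1 / σ) ∧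
      (∫ τ in Set.Ioo (0:ℝ) t, (t - τ) ^ (β - 1) / Real.Gamma β * G τ) = F t ^ (1 / l) := by
  have hls' : 0 < 1 - l * σ := by linarith
  have hγ₁pos : 0 < γ₁ := by rw [hγ₁]; positivity
  have hγ₂pos : 0 < γ₂ := by rw [hγ₂]; positivity
  have hΓ : ∀ x > 0, 0 < Gamma x := fun _ => Gamma_pos_of_pos
  set A := Gamma (γ₁ + 1) / Gamma (α + γ₁ + 1)
  set B := Gamma (γ₂ + 1) / Gamma (β + γ₂ + 1)
  have hA : 0 < A := div_pos (hΓ _ (by linarith)) (hΓ _ (by linarith))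
  have hB : 0 < B := div_pos (hΓ _ (by linarith)) (hΓ _ (by linarith))
  have hM₁A : M₁ = A * B ^ (1 / σ) := by
    rw [hM₁, div_rpow (hΓ _ (by linarith)).le (hΓ _ (by linarith)).le, mul_div_mul_comm]
  have hM₂B : M₂ = B * A ^ (1 / l) := by
    rw [hM₂, div_rpow (hΓ _ (by linarith)).le (hΓ _ (by linarith)).le, mul_div_mul_comm]
  have hM₁pos : 0 < M₁ := hM₁A ▸ mul_pos hA (rpow_pos_of_pos hB _)
  have hM₂pos : 0 < M₂ := hM₂B ▸ mul_pos hB (rpow_pos_of_pos hA _)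
  have hlσ : l * σ ≠ 1 := hls.ne
  have hσl : σ * l ≠ 1 := by rwa [mul_comm]
  have hexp₁ : γ₂ * (1 / σ) = α + γ₁ := by
    rw [hγ₁, hγ₂]; exact exponent_balance hσ.ne' hlσ
  have hexp₂ : γ₁ * (1 / l) = β + γ₂ := by
    rw [hγ₁, hγ₂, mul_comm l σ]; exact exponent_balance hl.ne' hσl
  have hconst₁ :
      M₁ ^ (l * σ / (1 - l * σ)) * A = (M₂ ^ (l * σ / (1 - l * σ))) ^ (1 / σ) := by
    rw [hM₁A, hM₂B]; exact mul_rpow_mul_self_eq hA hB hl.ne' hσ.ne' hlσ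
  have hconst₂ :
      M₂ ^ (l * σ / (1 - l * σ)) * B = (M₁ ^ (l * σ / (1 - l * σ))) ^ (1 / l) := by
    rw [hM₁A, hM₂B, mul_comm l σ]; exact mul_rpow_mul_self_eq hB hA hσ.ne' hl.ne' hσl
  intro t ht
  rw [hF t, hG t, if_pos ht, if_pos ht]
  exact ⟨setIntegral_Ioo_riemannLiouville_rpow_eq_rpow_one_div hα (by linarith) ht
      (fun τ hτ => by rw [hF, if_pos hτ]) (rpow_nonneg hM₂pos.le _) hexp₁ hconst₁,
    setIntegral_Ioo_riemannLiouville_rpow_eq_rpow_one_div hβ (by linarith) ht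
      (fun τ hτ => by rw [hG, if_pos hτ]) (rpow_nonneg hM₁pos.le _) hexp₂ hconst₂⟩
end

section
/- Let n ≥ 1, p, q ∈ [1,∞), α, β, λ, σ > 0 satisfy 2pα < n+2, (n+2-2pα)q²σ ≤ (n+2-2qβ)p²λ, and σ > μ(λ) := 2pβ/(n+2-2pα) + (n+2)/((n+2-2pα)λ). Define r₀ = (n+2)(λσ-1)/(2(β+ασ)λ) and s₀ = (n+2)(λσ-1)/(2(α+βλ)σ). Then λσ > 1, r₀ > p, and s₀ > q. -/
/-! Write `N = n + 2` and `A = N - 2pα`. Clearing denominators, `σ > μ(λ)` says exactly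
`2pβλ + N < Aλσ`, which is also exactly `p < r₀`; since `A < N` it gives `λσ > 1`.
By the symmetry `(p, α, λ) ↔ (q, β, σ)`, `q < s₀` means `2qασ + N < (N - 2qβ)σλ`. If `Aqσ ≤ Np`,
then `q ≤ Np / (Aσ)`, and `Np / (Aσ) < s₀` is again `2pβλ + N < Aλσ`. If `Aqσ > Np`, the
normalization gives `(N - 2qβ)λσ ≥ Aq²σ² / p²`, and `Aq²σ² - 2pα·pqσ - Np² = (qσ + p)(Aqσ - Np) > 0`. -/

section

variable {N p q α β l σ : ℝ}

theorem add_lt_mul_of_critical_lt (hA : 0 < N - 2 * p * α) (hl : 0 < l)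
    (hμ : σ > 2 * p * β / (N - 2 * p * α) + N / ((N - 2 * p * α) * l)) :
    2 * p * β * l + N < (N - 2 * p * α) * l * σ := by
  have h := mul_lt_mul_of_pos_right hμ (mul_pos hA hl)
  have cleared : (2 * p * β / (N - 2 * p * α) + N / ((N - 2 * p * α) * l))
      * ((N - 2 * p * α) * l) = 2 * p * β * l + N := by
    field_simp
  linarith

theorem one_lt_mul_of_add_lt_mul (hA : 0 < N - 2 * p * α) (hp : 0 ≤ p) (hα : 0 ≤ α)
    (hβ : 0 ≤ β) (hl : 0 ≤ l) (h : 2 * p * β * l + N < (N - 2 * p * α) * l * σ) :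
    1 < l * σ := by
  have hpβl : 0 ≤ 2 * p * β * l := by positivity
  have hlσ : 0 < l * σ := by
    have hN : 0 < N := by nlinarith [mul_nonneg hp hα]
    rw [mul_assoc] at h
    exact pos_of_mul_pos_right (by linarith) hA.le
  nlinarith [mul_nonneg (mul_nonneg hp hα) hlσ.le]

theorem lt_div_iff_add_lt_mul (hden : 0 < (β + α * σ) * l) :
    p < N * (l * σ - 1) / (2 * (β + α * σ) * l) ↔
      2 * p * β * l + N < (N - 2 * p * α) * l * σ := by
  rw [lt_div_iff₀ (by linarith)]
  constructor <;> intro h <;> linarith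

theorem add_lt_mul_of_mul_le (hN : 0 < N) (hA : 0 < N - 2 * p * α) (hαβ : 0 < α + β * l)
    (h : 2 * p * β * l + N < (N - 2 * p * α) * l * σ)
    (hc : (N - 2 * p * α) * q * σ ≤ N * p) :
    2 * q * α * σ + N < (N - 2 * q * β) * σ * l := by
  have key : (N - 2 * p * α) * (2 * q * σ * (α + β * l))
      < (N - 2 * p * α) * (N * (σ * l - 1)) :=
    calc (N - 2 * p * α) * (2 * q * σ * (α + β * l))
        = 2 * (α + β * l) * ((N - 2 * p * α) * q * σ) := by ring
      _ ≤ 2 * (α + β * l) * (N * p) := by gcongr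
      _ < (N - 2 * p * α) * (N * (σ * l - 1)) := by nlinarith [mul_pos hN (sub_pos.2 h)]
  nlinarith [lt_of_mul_lt_mul_left key hA.le]

theorem add_lt_mul_of_lt_mul (hN : 0 < N) (hA : 0 < N - 2 * p * α) (hp : 0 < p) (hσ : 0 ≤ σ)
    (hnorm : (N - 2 * p * α) * q ^ 2 * σ ≤ (N - 2 * q * β) * p ^ 2 * l)
    (hc : N * p < (N - 2 * p * α) * q * σ) :
    2 * q * α * σ + N < (N - 2 * q * β) * σ * l := by
  have hp2 : 0 < p ^ 2 := by positivity
  have hpos : 0 < q * σ + p := by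
    have : 0 < (N - 2 * p * α) * (q * σ) := by nlinarith [mul_pos hN hp]
    linarith [pos_of_mul_pos_right this hA.le]
  have factor : (N - 2 * p * α) * (q * σ) ^ 2 - (2 * q * α * σ + N) * p ^ 2
      = (q * σ + p) * ((N - 2 * p * α) * q * σ - N * p) := by ring
  have lower : (2 * q * α * σ + N) * p ^ 2 < (N - 2 * p * α) * (q * σ) ^ 2 := by
    nlinarith [mul_pos hpos (sub_pos.2 hc)]
  have upper : (N - 2 * p * α) * (q * σ) ^ 2 ≤ (N - 2 * q * β) * σ * l * p ^ 2 := by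
    nlinarith [mul_le_mul_of_nonneg_right hnorm hσ]
  exact lt_of_mul_lt_mul_right (lower.trans_le upper) hp2.le

end

theorem stmt_13_general (n : ℕ) (p q α β l σ : ℝ)
    (hp : 1 ≤ p) (hα : 0 < α) (hβ : 0 < β) (hl : 0 < l) (hσ : 0 < σ)
    (hpα : 2 * p * α < n + 2)
    (hnorm : (n + 2 - 2 * p * α) * q ^ 2 * σ ≤ (n + 2 - 2 * q * β) * p ^ 2 * l)
    (hμ : σ > 2 * p * β / (n + 2 - 2 * p * α) + (n + 2) / ((n + 2 - 2 * p * α) * l))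
    (r₀ s₀ : ℝ)
    (hr₀ : r₀ = (n + 2) * (l * σ - 1) / (2 * (β + α * σ) * l))
    (hs₀ : s₀ = (n + 2) * (l * σ - 1) / (2 * (α + β * l) * σ)) :
    1 < l * σ ∧ p < r₀ ∧ q < s₀ := by
  have hp0 : 0 < p := by linarith
  have hA : 0 < (n + 2 : ℝ) - 2 * p * α := by linarith
  have hcrit := add_lt_mul_of_critical_lt hA hl hμ
  refine ⟨one_lt_mul_of_add_lt_mul hA hp0.le hα.le hβ.le hl.le hcrit, ?_, ?_⟩
  · rwa [hr₀, lt_div_iff_add_lt_mul (by positivity)]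
  · rw [hs₀, mul_comm l σ, lt_div_iff_add_lt_mul (by positivity)]
    rcases le_or_gt ((n + 2 - 2 * p * α) * q * σ) ((n + 2) * p) with hc | hc
    · exact add_lt_mul_of_mul_le (by positivity) hA (by positivity) hcrit hc
    · exact add_lt_mul_of_lt_mul (by positivity) hA hp0 hσ.le hnorm hc

theorem stmt_13 (n : ℕ) (hn : 1 ≤ n) (p q α β l σ : ℝ)
    (hp : 1 ≤ p) (hq : 1 ≤ q) (hα : 0 < α) (hβ : 0 < β) (hl : 0 < l) (hσ : 0 < σ)
    (hpα : 2 * p * α < n + 2)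
    (hnorm : (n + 2 - 2 * p * α) * q ^ 2 * σ ≤ (n + 2 - 2 * q * β) * p ^ 2 * l)
    (hμ : σ > 2 * p * β / (n + 2 - 2 * p * α) + (n + 2) / ((n + 2 - 2 * p * α) * l))
    (r₀ s₀ : ℝ)
    (hr₀ : r₀ = (n + 2) * (l * σ - 1) / (2 * (β + α * σ) * l))
    (hs₀ : s₀ = (n + 2) * (l * σ - 1) / (2 * (α + β * l) * σ)) :
    1 < l * σ ∧ p < r₀ ∧ q < s₀ :=
  stmt_13_general n p q α β l σ hp hα hβ hl hσ hpα hnorm hμ r₀ s₀ hr₀ hs₀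
end
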